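/- Joins below joins: let ι: A → B exhibit B as a commutative Δ₁-extension of A, and let a, b, c, d ∈ A be such that the complements c_b of ι(b) and c_d of ι(d) exist in B. Then ι(a)·c_b ≤ ι(c)·c_d in B if and only if for all x, y ∈ A: x·c ≤ y + d implies x·a ≤ y + b. -/

import Mathlib

/-!
A complement `c` of `e` makes multiplication by `c` residuated: `u·c ≤ v ↔ u ≤ v + e`, and
symmetrically `u ≤ v + c ↔ e·u ≤ v`. Hence `ι x · (ι a · c_b) ≤ ι y` holds exactly when
`x·a ≤ y + b` in `A`. This gives the forward direction directly, and the converse after testing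
`ι c · c_d` against the meet-dense elements `ι y + c'`, with `c'` a complement of some `ι x`.
-/

/-- A commutative bimonoid: a partially ordered set with two commutative
monoid operations, a multiplication `mul` with unit `one` and an addition
`add` with unit `zero`, both monotone in each argument, satisfying the
hemidistributive law `x·(y+z) ≤ (x·y)+z`. -/
structure CommBimonoidOn (A : Type*) [PartialOrder A] where
  mul : A → A → A
  add : A → A → A
  one : A
  zero : A
  mul_assoc : ∀ x y z, mul (mul x y) z = mul x (mul y z)
  mul_comm : ∀ x y, mul x y = mul y x
  mul_one : ∀ x, mul x one = x
  add_assoc : ∀ x y z, add (add x y) z = add x (add y z)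
  add_comm : ∀ x y, add x y = add y x
  add_zero : ∀ x, add x zero = x
  mul_mono : ∀ {x y : A} (z), x ≤ y → mul x z ≤ mul y z
  add_mono : ∀ {x y : A} (z), x ≤ y → add x z ≤ add y z
  hemi : ∀ x y z, mul x (add y z) ≤ add (mul x y) z

/-- `c` is a complement of `a` in the commutative bimonoid `S`. -/
def CommBimonoidOn.IsCompl {A : Type*} [PartialOrder A]
    (S : CommBimonoidOn A) (a c : A) : Prop :=
  S.mul a c ≤ S.zero ∧ S.one ≤ S.add a c

/-- `B` (with bimonoid structure `SB`) is a commutative Δ₁-extension of `A`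
(with bimonoid structure `SA`) via `ι`: `ι` is an order embedding which is a
homomorphism for `·, 1, +, 0`, elements of the form `ι a · (ι b)⁻` are join
dense, and elements of the form `ι a + (ι b)⁻` are meet dense. -/
structure IsDeltaOneExt {A B : Type*} [PartialOrder A] [PartialOrder B]
    (SA : CommBimonoidOn A) (SB : CommBimonoidOn B) (ι : A → B) : Prop where
  emb : ∀ a a' : A, a ≤ a' ↔ ι a ≤ ι a'
  map_mul : ∀ a a', ι (SA.mul a a') = SB.mul (ι a) (ι a')
  map_one : ι SA.one = SB.one
  map_add : ∀ a a', ι (SA.add a a') = SB.add (ι a) (ι a')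
  map_zero : ι SA.zero = SB.zero
  join_dense : ∀ x : B, ∃ S : Set B, IsLUB S x ∧
    ∀ s ∈ S, ∃ a b c, SB.IsCompl (ι b) c ∧ s = SB.mul (ι a) c
  meet_dense : ∀ x : B, ∃ S : Set B, IsGLB S x ∧
    ∀ s ∈ S, ∃ a b c, SB.IsCompl (ι b) c ∧ s = SB.add (ι a) c

namespace CommBimonoidOn

variable {A : Type*} [PartialOrder A] (S : CommBimonoidOn A)

theorem mul_mono_right {x y : A} (z : A) (h : x ≤ y) : S.mul z x ≤ S.mul z y := by
  rw [S.mul_comm z x, S.mul_comm z y]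
  exact S.mul_mono z h

variable {S}

theorem IsCompl.symm {e c : A} (hc : S.IsCompl e c) : S.IsCompl c e :=
  ⟨S.mul_comm c e ▸ hc.1, S.add_comm c e ▸ hc.2⟩

theorem mul_compl_le_iff {e c : A} (hc : S.IsCompl e c) (u v : A) :
    S.mul u c ≤ v ↔ u ≤ S.add v e := by
  constructor
  · intro h
    calc u = S.mul u S.one := (S.mul_one u).symm
      _ ≤ S.mul u (S.add c e) := S.mul_mono_right u (S.add_comm e c ▸ hc.2)
      _ ≤ S.add (S.mul u c) e := S.hemi ..
      _ ≤ S.add v e := S.add_mono e h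
  · intro h
    calc S.mul u c ≤ S.mul (S.add v e) c := S.mul_mono c h
      _ = S.mul c (S.add e v) := by rw [S.mul_comm, S.add_comm]
      _ ≤ S.add (S.mul c e) v := S.hemi ..
      _ ≤ S.add S.zero v := S.add_mono v (S.mul_comm e c ▸ hc.1)
      _ = v := by rw [S.add_comm, S.add_zero]

theorem le_add_compl_iff {e c : A} (hc : S.IsCompl e c) (u v : A) :
    u ≤ S.add v c ↔ S.mul e u ≤ v := by
  rw [S.mul_comm]
  exact (mul_compl_le_iff hc.symm u v).symm

end CommBimonoidOn

theorem IsDeltaOneExt.mul_mul_compl_le_iff {A B : Type*} [PartialOrder A] [PartialOrder B]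
    {SA : CommBimonoidOn A} {SB : CommBimonoidOn B} {ι : A → B}
    (hext : IsDeltaOneExt SA SB ι) {b : A} {cb : B} (hcb : SB.IsCompl (ι b) cb) (x a y : A) :
    SB.mul (ι x) (SB.mul (ι a) cb) ≤ ι y ↔ SA.mul x a ≤ SA.add y b := by
  rw [← SB.mul_assoc, CommBimonoidOn.mul_compl_le_iff hcb, ← hext.map_mul, ← hext.map_add,
    ← hext.emb]

/-- Joins below joins: in a commutative Δ₁-extension, `ι a · (ι b)⁻ ≤
ι c · (ι d)⁻` if and only if for all `x, y ∈ A`, `x·c ≤ y + d` implies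
`x·a ≤ y + b`. -/
theorem joins_below_joins {A B : Type*} [PartialOrder A] [PartialOrder B]
    (SA : CommBimonoidOn A) (SB : CommBimonoidOn B) (ι : A → B)
    (hext : IsDeltaOneExt SA SB ι)
    (a b c d : A) (cb cd : B)
    (hcb : SB.IsCompl (ι b) cb) (hcd : SB.IsCompl (ι d) cd) :
    SB.mul (ι a) cb ≤ SB.mul (ι c) cd ↔
      ∀ x y : A, SA.mul x c ≤ SA.add y d → SA.mul x a ≤ SA.add y b := by
  constructor
  · intro h x y hxy
    rw [← hext.mul_mul_compl_le_iff hcb]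
    exact (SB.mul_mono_right (ι x) h).trans ((hext.mul_mul_compl_le_iff hcd x c y).mpr hxy)
  · intro h
    obtain ⟨T, hT, hT_form⟩ := hext.meet_dense (SB.mul (ι c) cd)
    refine hT.2 fun s hs => ?_
    obtain ⟨y, x, c', hc', rfl⟩ := hT_form s hs
    have hcx : SA.mul x c ≤ SA.add y d := by
      rw [← hext.mul_mul_compl_le_iff hcd, ← CommBimonoidOn.le_add_compl_iff hc']
      exact hT.1 hs
    rw [CommBimonoidOn.le_add_compl_iff hc', hext.mul_mul_compl_le_iff hcb]
    exact h x y hcx
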